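/- arXiv:1909.08333 — 6 statements merged into one kernel-verified Lean document; each statement's English description precedes it below -/
import Mathlib

section
/- Let $\alpha,\beta,\gamma \ge 0$ with $\beta \ge 1$, and let $(e_k^N)_{k\ge 0, N\ge 0}$ be a family of nonnegative reals satisfying: $e_k^0 = 0$ for all $k \ge 0$; $e_0^N = \beta e_0^{N-1} + \gamma$ for all $N \ge 1$; and $e_k^N = \alpha e_{k-1}^{N-1} + \beta e_k^{N-1}$ for all $k \ge 1$, $N \ge 1$. Then for all $k \ge 0$ and $N \ge 0$, $e_k^N \le \gamma\, \alpha^k\, \beta^{N-k-1} \binom{N}{k+1}$ (where the inequality is interpreted with $\beta^{N-k-1} := \beta^{N-k-1}$ whenever $N \ge k+1$, and the right-hand side is $0$ when $N \le k$ since $\binom{N}{k+1}=0$; in the case $N = k+1$ the exponent $N-k-1 = 0$). -/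
/-!
The bound `b k N = γ α^k β^(N-k-1) C(N, k+1)` satisfies the interior recursion
`b (k+1) (N+1) = α b k N + β b (k+1) N` exactly, by Pascal's rule, and it dominates the
boundary recursion `b 0 (N+1) ≥ β b 0 N + γ` because `β^N ≥ 1`. Since `α, β ≥ 0` the recursion
is monotone, so induction on `N` shows that every subsolution lies below every supersolution;
in particular `e ≤ b`.
-/

open Finset

namespace Parareal

theorem eq_zero_of_le {α β : ℝ} {e : ℕ → ℕ → ℝ} (h0 : ∀ k, e k 0 = 0)
    (hrec : ∀ k N, e (k + 1) (N + 1) = α * e k N + β * e (k + 1) N) :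
    ∀ k N, N ≤ k → e k N = 0 := by
  intro k N
  induction N generalizing k with
  | zero => exact fun _ => h0 k
  | succ N ih =>
    intro hN
    obtain ⟨k, rfl⟩ : ∃ k', k = k' + 1 := ⟨k - 1, by omega⟩
    rw [hrec, ih k (by omega), ih (k + 1) (by omega)]
    ring

theorem le_of_subsolution_of_supersolution {α β γ : ℝ} (hα : 0 ≤ α) (hβ : 0 ≤ β)
    {e f : ℕ → ℕ → ℝ} (h0 : ∀ k, e k 0 ≤ f k 0)
    (he0 : ∀ N, e 0 (N + 1) ≤ β * e 0 N + γ) (hf0 : ∀ N, β * f 0 N + γ ≤ f 0 (N + 1))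
    (he : ∀ k N, e (k + 1) (N + 1) ≤ α * e k N + β * e (k + 1) N)
    (hf : ∀ k N, α * f k N + β * f (k + 1) N ≤ f (k + 1) (N + 1)) :
    ∀ k N, e k N ≤ f k N := by
  intro k N
  induction N generalizing k with
  | zero => exact h0 k
  | succ N ih =>
    cases k with
    | zero =>
      have := mul_le_mul_of_nonneg_left (ih 0) hβ
      linarith [he0 N, hf0 N]
    | succ k =>
      have := mul_le_mul_of_nonneg_left (ih k) hα
      have := mul_le_mul_of_nonneg_left (ih (k + 1)) hβ
      linarith [he k N, hf k N]

/-- Truncated subtraction in the exponent is harmless: `C(N, k+1) = 0` whenever `N ≤ k`. -/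
def errorBound (α β γ : ℝ) (k N : ℕ) : ℝ :=
  γ * α ^ k * β ^ (N - (k + 1)) * (N.choose (k + 1) : ℝ)

variable {α β γ : ℝ}

theorem errorBound_zero_right (k : ℕ) : errorBound α β γ k 0 = 0 := by
  simp [errorBound]

theorem errorBound_succ_succ (k N : ℕ) :
    errorBound α β γ (k + 1) (N + 1) =
      α * errorBound α β γ k N + β * errorBound α β γ (k + 1) N := by
  have hshift : β ^ (N - (k + 1)) * (N.choose (k + 2) : ℝ) =
      β * β ^ (N - (k + 2)) * (N.choose (k + 2) : ℝ) := by
    rcases lt_or_ge N (k + 2) with hN | hN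
    · simp [Nat.choose_eq_zero_of_lt hN]
    · rw [← pow_succ', show N - (k + 2) + 1 = N - (k + 1) by omega]
  simp only [errorBound, Nat.choose_succ_succ' N (k + 1), Nat.succ_sub_succ, Nat.cast_add]
  linear_combination γ * α ^ (k + 1) * hshift

theorem le_errorBound_zero_succ (hβ : 1 ≤ β) (hγ : 0 ≤ γ) (N : ℕ) :
    β * errorBound α β γ 0 N + γ ≤ errorBound α β γ 0 (N + 1) := by
  cases N with
  | zero => simp [errorBound]
  | succ M =>
    have : γ ≤ γ * β ^ (M + 1) := le_mul_of_one_le_right hγ (one_le_pow₀ hβ)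
    simp only [errorBound, Nat.choose_one_right, Nat.cast_add, Nat.cast_one, pow_zero,
      zero_add, Nat.add_sub_cancel, pow_succ] at this ⊢
    linarith

end Parareal

open Parareal in
theorem parareal_ideal_recursion_bound_general
    (α β γ : ℝ) (hα : 0 ≤ α) (hβ : 1 ≤ β) (hγ : 0 ≤ γ)
    (e : ℕ → ℕ → ℝ)
    (h0 : ∀ k, e k 0 = 0)
    (hrec0 : ∀ N, e 0 (N + 1) = β * e 0 N + γ)
    (hrec : ∀ k N, e (k + 1) (N + 1) = α * e k N + β * e (k + 1) N) :
    (∀ k N, N ≤ k → e k N = 0) ∧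
      (∀ k N, k + 1 ≤ N →
        e k N ≤ γ * α ^ k * β ^ (N - (k + 1)) * (N.choose (k + 1) : ℝ)) := by
  refine ⟨eq_zero_of_le h0 hrec, fun k N _ => ?_⟩
  exact le_of_subsolution_of_supersolution hα (zero_le_one.trans hβ)
    (fun k => (h0 k).trans_le (errorBound_zero_right k).ge)
    (fun N => (hrec0 N).le) (le_errorBound_zero_succ hβ hγ)
    (fun k N => (hrec k N).le) (fun k N => (errorBound_succ_succ k N).ge) k N

theorem parareal_ideal_recursion_bound
    (α β γ : ℝ) (hα : 0 ≤ α) (hβ : 1 ≤ β) (hγ : 0 ≤ γ)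
    (e : ℕ → ℕ → ℝ) (he_nonneg : ∀ k N, 0 ≤ e k N)
    (h0 : ∀ k, e k 0 = 0)
    (hrec0 : ∀ N, e 0 (N + 1) = β * e 0 N + γ)
    (hrec : ∀ k N, e (k + 1) (N + 1) = α * e k N + β * e (k + 1) N) :
    (∀ k N, N ≤ k → e k N = 0) ∧
      (∀ k N, k + 1 ≤ N →
        e k N ≤ γ * α ^ k * β ^ (N - (k + 1)) * (N.choose (k + 1) : ℝ)) :=
  parareal_ideal_recursion_bound_general α β γ hα hβ hγ e h0 hrec0 hrec
end

section
/- Let $\alpha, \beta, \gamma \ge 0$ with $\beta \ge 1$, let $(g_k)_{k \ge -1}$ be nonnegative reals with $g_{-1} = \gamma$, and let $(\tilde e_k^N)$ be nonnegative reals satisfying: $\tilde e_k^0 = 0$ for all $k$; $\tilde e_0^N = \beta \tilde e_0^{N-1} + \gamma$ for $N \ge 1$; and $\tilde e_k^N = \alpha \tilde e_{k-1}^{N-1} + \beta \tilde e_k^{N-1} + g_{k-1}$ for $k \ge 1$, $N \ge 1$. Then for all $k \ge 1$ and $N \ge 1$, $\tilde e_k^N \le \sum_{\ell=0}^{k} \alpha^{\ell}\,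 g_{k-1-\ell}\, \beta^{N-\ell-1} \binom{N}{\ell+1}$, where terms with $\ell+1 > N$ vanish since $\binom{N}{\ell+1}=0$. -/
/-!
With `G 0 = γ` and `G (j + 1) = g j`, the bound `B k N = pararealBound α β G k N` satisfies the
recursion of `e` with equality, except that the source term `G k` comes multiplied by
`β ^ N ≥ 1`: by Pascal's rule `B k (N + 1) = β * B k N + ∑ ℓ, α ^ ℓ * G (k - ℓ) * β ^ (N - ℓ) *
N.choose ℓ`, whose `ℓ = 0` term is `G k * β ^ N` and whose other terms add up to `α * B (k - 1) N`.
So `B` is a supersolution and dominates `e` by induction on `k` and then on `N`.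
-/

open Finset

section Bound

variable {R : Type*} [CommSemiring R] (α β : R) (G : ℕ → R)

def pararealBound (k N : ℕ) : R :=
  ∑ ℓ ∈ range (k + 1), α ^ ℓ * G (k - ℓ) * β ^ (N - (ℓ + 1)) * (N.choose (ℓ + 1) : R)

theorem pararealBound_zero_right (k : ℕ) : pararealBound α β G k 0 = 0 := by
  simp [pararealBound]

theorem pararealBound_succ_right (k N : ℕ) :
    pararealBound α β G k (N + 1) = β * pararealBound α β G k N +
      ∑ ℓ ∈ range (k + 1), α ^ ℓ * G (k - ℓ) * β ^ (N - ℓ) * (N.choose ℓ : R) := by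
  rw [pararealBound, pararealBound, mul_sum, ← sum_add_distrib]
  refine sum_congr rfl fun ℓ _ => ?_
  rw [Nat.choose_succ_succ', Nat.add_sub_add_right, Nat.cast_add]
  rcases lt_or_ge N (ℓ + 1) with hN | hN
  · simp [Nat.choose_eq_zero_of_lt hN]
  · rw [show N - ℓ = N - (ℓ + 1) + 1 by omega, pow_succ]
    ring

theorem sum_range_choose_eq_pararealBound (k N : ℕ) :
    ∑ ℓ ∈ range (k + 2), α ^ ℓ * G (k + 1 - ℓ) * β ^ (N - ℓ) * (N.choose ℓ : R) =
      G (k + 1) * β ^ N + α * pararealBound α β G k N := by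
  rw [sum_range_succ', pararealBound, mul_sum, add_comm]
  congr 1
  · simp
  · refine sum_congr rfl fun ℓ _ => ?_
    rw [Nat.add_sub_add_right, pow_succ]
    ring

end Bound

theorem le_pararealBound {α β : ℝ} {G : ℕ → ℝ} (hα : 0 ≤ α) (hβ : 1 ≤ β) (hG : ∀ j, 0 ≤ G j)
    {e : ℕ → ℕ → ℝ} (h0 : ∀ k, e k 0 ≤ 0)
    (hrec0 : ∀ N, e 0 (N + 1) ≤ β * e 0 N + G 0)
    (hrec : ∀ k N, e (k + 1) (N + 1) ≤ α * e k N + β * e (k + 1) N + G (k + 1))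
    (k N : ℕ) : e k N ≤ pararealBound α β G k N := by
  have hsource : ∀ j N, G j ≤ G j * β ^ N := fun j N =>
    le_mul_of_one_le_right (hG j) (one_le_pow₀ hβ)
  have hβ0 : 0 ≤ β := zero_le_one.trans hβ
  induction k generalizing N with
  | zero =>
    induction N with
    | zero => simpa [pararealBound_zero_right] using h0 0
    | succ N ihN =>
      rw [pararealBound_succ_right]
      have := mul_le_mul_of_nonneg_left ihN hβ0
      simp only [zero_add, sum_range_one, pow_zero, one_mul, Nat.sub_zero, Nat.choose_zero_right,
        Nat.cast_one, mul_one]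
      linarith [hrec0 N, hsource 0 N]
  | succ k ihk =>
    induction N with
    | zero => simpa [pararealBound_zero_right] using h0 (k + 1)
    | succ N ihN =>
      rw [pararealBound_succ_right, sum_range_choose_eq_pararealBound]
      have := mul_le_mul_of_nonneg_left ihN hβ0
      have := mul_le_mul_of_nonneg_left (ihk N) hα
      linarith [hrec k N, hsource (k + 1) N]

theorem parareal_perturbed_recursion_bound_general
    (α β γ : ℝ) (hα : 0 ≤ α) (hβ : 1 ≤ β) (hγ : 0 ≤ γ)
    (g : ℕ → ℝ) (hg : ∀ k, 0 ≤ g k)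
    (e : ℕ → ℕ → ℝ)
    (h0 : ∀ k, e k 0 = 0)
    (hrec0 : ∀ N, e 0 (N + 1) = β * e 0 N + γ)
    (hrec : ∀ k N, e (k + 1) (N + 1) = α * e k N + β * e (k + 1) N + g k) :
    ∀ k N, 1 ≤ k → 1 ≤ N →
      e k N ≤ ∑ ℓ ∈ range (k + 1),
        α ^ ℓ * (if ℓ = k then γ else g (k - 1 - ℓ)) *
          β ^ (N - (ℓ + 1)) * (N.choose (ℓ + 1) : ℝ) := by
  intro k N _ _
  let G : ℕ → ℝ := fun | 0 => γ | j + 1 => g j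
  have hG : ∀ j, 0 ≤ G j := fun | 0 => hγ | j + 1 => hg j
  have hcoeff : ∀ ℓ ∈ range (k + 1), (if ℓ = k then γ else g (k - 1 - ℓ)) = G (k - ℓ) := by
    intro ℓ hℓ
    split_ifs with hℓk
    · simp [G, hℓk]
    · rw [show k - ℓ = k - 1 - ℓ + 1 by grind]
  calc e k N ≤ pararealBound α β G k N :=
        le_pararealBound hα hβ hG (fun k => (h0 k).le) (fun N => (hrec0 N).le)
          (fun k N => (hrec k N).le) k N
    _ = _ := sum_congr rfl fun ℓ hℓ => by rw [hcoeff ℓ hℓ]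

theorem parareal_perturbed_recursion_bound
    (α β γ : ℝ) (hα : 0 ≤ α) (hβ : 1 ≤ β) (hγ : 0 ≤ γ)
    (g : ℕ → ℝ) (hg : ∀ k, 0 ≤ g k)
    (e : ℕ → ℕ → ℝ) (he_nonneg : ∀ k N, 0 ≤ e k N)
    (h0 : ∀ k, e k 0 = 0)
    (hrec0 : ∀ N, e 0 (N + 1) = β * e 0 N + γ)
    (hrec : ∀ k N, e (k + 1) (N + 1) = α * e k N + β * e (k + 1) N + g k) :
    ∀ k N, 1 ≤ k → 1 ≤ N →
      e k N ≤ ∑ ℓ ∈ range (k + 1),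
        α ^ ℓ * (if ℓ = k then γ else g (k - 1 - ℓ)) *
          β ^ (N - (ℓ + 1)) * (N.choose (ℓ + 1) : ℝ) :=
  parareal_perturbed_recursion_bound_general α β γ hα hβ hγ g hg e h0 hrec0 hrec
end

section
/- Let $\mathbb{U}$ be a Banach space, $\Delta T > 0$, $\underline{N} \ge 1$, $T = \underline{N}\,\Delta T$, and $T_N = N \Delta T$. Let $\mathcal{E}, \mathcal{G} : \{0,\dots,\underline{N}-1\} \times \mathbb{U} \to \mathbb{U}$ (propagation over one macro-interval starting at $T_N$) and set $\delta\mathcal{G} = \mathcal{E} - \mathcal{G}$. Assume there exist constants $\varepsilon_{\mathcal G}, C_c, C_d > 0$ such that for all $N$ and all $x, y \in \mathbb{U}$: (i) $\|\delta\mathcal{G}(N,x)\| \le \Delta T\,(1+\|x\|)\,\varepsilon_{\mathcal G}$; (ii) $\|\mathcal{G}(N,x)-\mathcal{G}(N,y)\| \le (1+C_c\Delta T)\|x-y\|$; (iii) $\|\delta\mathcal{G}(N,x)-\delta\mathcal{G}(N,y)\| \le C_d\,\Delta T\,\varepsilon_{\mathcal G}\,\|x-y\|$. Let $u(T_0) \in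 \mathbb{U}$ and $u(T_{N+1}) = \mathcal{E}(N, u(T_N))$. Define the parareal iterates by $y_0^0 = u(T_0)$, $y_0^{N+1} = \mathcal{G}(N, y_0^N)$, and $y_{k+1}^{N+1} = \mathcal{G}(N, y_{k+1}^N) + \mathcal{E}(N, y_k^N) - \mathcal{G}(N, y_k^N)$. Then for every $k \ge 0$, $\max_{0 \le N \le \underline N} \|u(T_N) - y_k^N\| \le \mu\, \frac{\tau^{k+1}}{(k+1)!}$, where $\mu = \frac{e^{C_c T}}{C_d} \max_{0\le N\le \underline N}(1+\|u(T_N)\|)$ and $\tau = C_d\,T\,e^{-C_c \Delta T}\,\varepsilon_{\mathcal G}$. -/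
/-!
Write `e k N = ‖u N - y k N‖`, `γ = 1 + Cc ΔT` and `β = Cd ΔT εG`. Splitting the parareal
correction into a coarse increment and a defect increment gives
`e (k+1) (N+1) ≤ γ e (k+1) N + β e k N`, while accuracy gives `e 0 (N+1) ≤ γ e 0 N + β M / Cd`
with `M = max (1 + ‖u N‖)`. Solving this recurrence row by row (a discrete Duhamel formula, in
which Pascal's rule appears) yields `e k N ≤ β^(k+1) (M / Cd) C(N, k+1) γ^(N-k-1)`, and
`C(N, k+1) ≤ N^(k+1) / (k+1)!` together with `γ ≤ exp (Cc ΔT)` turns this into the claim.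
-/

open Finset

/-- Both sides vanish when `n < j`, so no truncated subtraction needs care. -/
lemma choose_mul_pow_sub_mul_pow {R : Type*} [CommSemiring R] (x : R) (n j i : ℕ) :
    (n.choose j : R) * x ^ (n - j) * x ^ i = n.choose j * x ^ (n + i - j) := by
  rcases le_or_gt j n with h | h
  · rw [mul_assoc, ← pow_add, show n - j + i = n + i - j by omega]
  · simp [Nat.choose_eq_zero_of_lt h]

lemma duhamel_le_choose_succ {γ β c : ℝ} (hγ : 0 ≤ γ) (hβ : 0 ≤ β) {n k : ℕ} {a b : ℕ → ℝ}
    (ha : ∀ N ≤ n, a N ≤ c * N.choose k * γ ^ (N - k))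
    (hb0 : b 0 ≤ 0) (hb : ∀ N < n, b (N + 1) ≤ γ * b N + β * a N) :
    ∀ N ≤ n, b N ≤ β * c * N.choose (k + 1) * γ ^ (N - (k + 1)) := by
  intro N hN
  induction N with
  | zero => simpa using hb0
  | succ N ih =>
    have hN' : N < n := hN
    have hshift := choose_mul_pow_sub_mul_pow γ N (k + 1) 1
    rw [Nat.add_sub_add_right, pow_one] at hshift
    calc b (N + 1) ≤ γ * b N + β * a N := hb N hN'
      _ ≤ γ * (β * c * N.choose (k + 1) * γ ^ (N - (k + 1)))
          + β * (c * N.choose k * γ ^ (N - k)) := by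
        gcongr
        exacts [ih hN'.le, ha N hN'.le]
      _ = β * c * (N.choose k + N.choose (k + 1)) * γ ^ (N - k) := by
        linear_combination β * c * hshift
      _ = β * c * (N + 1).choose (k + 1) * γ ^ (N + 1 - (k + 1)) := by
        rw [Nat.choose_succ_succ', Nat.add_sub_add_right]; push_cast; ring

lemma le_pow_mul_choose_of_recurrence {γ β A : ℝ} (hγ : 1 ≤ γ) (hβ : 0 ≤ β) (hA : 0 ≤ A)
    {n : ℕ} {e : ℕ → ℕ → ℝ} (he0 : ∀ k, e k 0 ≤ 0)
    (hbase : ∀ N < n, e 0 (N + 1) ≤ γ * e 0 N + β * A)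
    (hstep : ∀ k, ∀ N < n, e (k + 1) (N + 1) ≤ γ * e (k + 1) N + β * e k N) :
    ∀ k, ∀ N ≤ n, e k N ≤ β ^ (k + 1) * A * N.choose (k + 1) * γ ^ (N - (k + 1)) := by
  intro k
  induction k with
  | zero =>
    have hconst : ∀ N ≤ n, A ≤ A * N.choose 0 * γ ^ (N - 0) := fun N _ => by
      simpa using le_mul_of_one_le_right hA (one_le_pow₀ hγ)
    intro N hN
    simpa using duhamel_le_choose_succ (by linarith) hβ hconst (he0 0) hbase N hN
  | succ k ih =>
    intro N hN
    refine (duhamel_le_choose_succ (by linarith) hβ ih (he0 (k + 1)) (hstep k) N hN).trans_eq ?_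
    ring

lemma norm_parareal_update_sub_le {U : Type*} [SeminormedAddCommGroup U] {E G : U → U} {γ β : ℝ}
    (hG : ∀ x y, ‖G x - G y‖ ≤ γ * ‖x - y‖)
    (hδ : ∀ x y, ‖(E x - G x) - (E y - G y)‖ ≤ β * ‖x - y‖) (x y z : U) :
    ‖E x - (G y + E z - G z)‖ ≤ γ * ‖x - y‖ + β * ‖x - z‖ := by
  calc ‖E x - (G y + E z - G z)‖ = ‖(G x - G y) + ((E x - G x) - (E z - G z))‖ := by
        congr 1; abel
    _ ≤ _ := (norm_add_le _ _).trans (add_le_add (hG x y) (hδ x z))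

lemma choose_mul_pow_le_exp {x : ℝ} (hx : 0 ≤ x) {N n : ℕ} (hN : N ≤ n) (j : ℕ) :
    (N.choose j : ℝ) * (1 + x) ^ (N - j)
      ≤ n ^ j / j.factorial * (Real.exp x ^ n * Real.exp (-x) ^ j) := by
  have hexp : 1 + x ≤ Real.exp x := by linarith [Real.add_one_le_exp x]
  calc (N.choose j : ℝ) * (1 + x) ^ (N - j) ≤ n.choose j * Real.exp x ^ (n - j) := by
        gcongr ?_ * ?_
        · exact_mod_cast Nat.choose_le_choose j hN
        · calc (1 + x) ^ (N - j) ≤ Real.exp x ^ (N - j) := by gcongr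
            _ ≤ Real.exp x ^ (n - j) := pow_le_pow_right₀ (Real.one_le_exp hx) (by omega)
    _ = n.choose j * Real.exp x ^ (n - j) * Real.exp x ^ j * Real.exp (-x) ^ j := by
        rw [mul_assoc _ (Real.exp x ^ j), ← mul_pow, ← Real.exp_add, add_neg_cancel,
          Real.exp_zero, one_pow, mul_one]
    _ ≤ n ^ j / j.factorial * (Real.exp x ^ n * Real.exp (-x) ^ j) := by
        rw [choose_mul_pow_sub_mul_pow, Nat.add_sub_cancel, mul_assoc]
        gcongr
        exact Nat.choose_le_pow_div j n

theorem parareal_ideal_convergence_general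
    {U : Type*} [NormedAddCommGroup U]
    (NN : ℕ) (ΔT : ℝ) (hΔT : 0 < ΔT)
    (T : ℝ) (hT : T = NN * ΔT)
    (E G : ℕ → U → U)
    (εG Cc Cd : ℝ) (hεG : 0 < εG) (hCc : 0 < Cc) (hCd : 0 < Cd)
    -- (i) accuracy of the coarse solver
    (hacc : ∀ N < NN, ∀ x : U, ‖E N x - G N x‖ ≤ ΔT * (1 + ‖x‖) * εG)
    -- (ii) Lipschitz stability of the coarse solver
    (hlip : ∀ N < NN, ∀ x y : U,
      ‖G N x - G N y‖ ≤ (1 + Cc * ΔT) * ‖x - y‖)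
    -- (iii) Lipschitz continuity of the defect δG = E - G
    (hdef : ∀ N < NN, ∀ x y : U,
      ‖(E N x - G N x) - (E N y - G N y)‖ ≤ Cd * ΔT * εG * ‖x - y‖)
    -- exact trajectory
    (u : ℕ → U) (hu : ∀ N < NN, u (N + 1) = E N (u N))
    -- parareal iterates
    (y : ℕ → ℕ → U)
    (hyk0 : ∀ k, y k 0 = u 0)
    (hy0 : ∀ N < NN, y 0 (N + 1) = G N (y 0 N))
    (hyk : ∀ k, ∀ N < NN,
      y (k + 1) (N + 1) = G N (y (k + 1) N) + E N (y k N) - G N (y k N))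
    (μ τ : ℝ)
    (hμ : μ = Real.exp (Cc * T) / Cd *
      ((range (NN + 1)).sup' (nonempty_range_iff.mpr (Nat.succ_ne_zero NN))
        fun N => 1 + ‖u N‖))
    (hτ : τ = Cd * T * Real.exp (-(Cc * ΔT)) * εG) :
    ∀ k : ℕ, ∀ N ≤ NN,
      ‖u N - y k N‖ ≤ μ * τ ^ (k + 1) / (Nat.factorial (k + 1) : ℝ) := by
  set M := (range (NN + 1)).sup' (nonempty_range_iff.mpr (Nat.succ_ne_zero NN))
    fun N => 1 + ‖u N‖
  have hM : ∀ N ≤ NN, 1 + ‖u N‖ ≤ M := fun N hN =>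
    le_sup' (fun N => 1 + ‖u N‖) (mem_range.2 (Nat.lt_succ_of_le hN))
  have hM0 : 0 ≤ M := (by positivity : (0 : ℝ) ≤ 1 + ‖u 0‖).trans (hM 0 NN.zero_le)
  have hCcΔT : 0 ≤ Cc * ΔT := by positivity
  have hbound := le_pow_mul_choose_of_recurrence (e := fun k N => ‖u N - y k N‖)
    (by linarith : 1 ≤ 1 + Cc * ΔT) (by positivity : 0 ≤ Cd * ΔT * εG) (by positivity : 0 ≤ M / Cd)
    (fun k => by simp [hyk0])
    (fun N hN => by
      calc ‖u (N + 1) - y 0 (N + 1)‖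
          ≤ ‖E N (u N) - G N (u N)‖ + ‖G N (u N) - G N (y 0 N)‖ := by
            rw [hu N hN, hy0 N hN]; exact norm_sub_le_norm_sub_add_norm_sub _ _ _
        _ ≤ ΔT * M * εG + (1 + Cc * ΔT) * ‖u N - y 0 N‖ := by
            gcongr
            exacts [(hacc N hN _).trans (by gcongr; exact hM N hN.le), hlip N hN _ _]
        _ = _ := by field_simp; ring)
    (fun k N hN => by
      simpa only [hu N hN, hyk k N hN] using
        norm_parareal_update_sub_le (hlip N hN) (hdef N hN) (u N) (y (k + 1) N) (y k N))
  intro k N hN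
  have hexpT : Real.exp (Cc * T) = Real.exp (Cc * ΔT) ^ NN := by
    rw [← Real.exp_nat_mul, hT]; ring_nf
  calc ‖u N - y k N‖ ≤ _ := hbound k N hN
    _ ≤ (Cd * ΔT * εG) ^ (k + 1) * (M / Cd) * (NN ^ (k + 1) / (k + 1).factorial
          * (Real.exp (Cc * ΔT) ^ NN * Real.exp (-(Cc * ΔT)) ^ (k + 1))) := by
        rw [mul_assoc _ (N.choose (k + 1) : ℝ)]
        exact mul_le_mul_of_nonneg_left (choose_mul_pow_le_exp hCcΔT hN (k + 1)) (by positivity)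
    _ = _ := by
        rw [hμ, hτ, hexpT, hT]; field_simp; ring

theorem parareal_ideal_convergence
    {U : Type*} [NormedAddCommGroup U] [NormedSpace ℝ U] [CompleteSpace U]
    (NN : ℕ) (hNN : 1 ≤ NN) (ΔT : ℝ) (hΔT : 0 < ΔT)
    (T : ℝ) (hT : T = NN * ΔT)
    (E G : ℕ → U → U)
    (εG Cc Cd : ℝ) (hεG : 0 < εG) (hCc : 0 < Cc) (hCd : 0 < Cd)
    -- (i) accuracy of the coarse solver
    (hacc : ∀ N < NN, ∀ x : U, ‖E N x - G N x‖ ≤ ΔT * (1 + ‖x‖) * εG)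
    -- (ii) Lipschitz stability of the coarse solver
    (hlip : ∀ N < NN, ∀ x y : U,
      ‖G N x - G N y‖ ≤ (1 + Cc * ΔT) * ‖x - y‖)
    -- (iii) Lipschitz continuity of the defect δG = E - G
    (hdef : ∀ N < NN, ∀ x y : U,
      ‖(E N x - G N x) - (E N y - G N y)‖ ≤ Cd * ΔT * εG * ‖x - y‖)
    -- exact trajectory
    (u : ℕ → U) (hu : ∀ N < NN, u (N + 1) = E N (u N))
    -- parareal iterates
    (y : ℕ → ℕ → U)
    (hy00 : y 0 0 = u 0) (hyk0 : ∀ k, y k 0 = u 0)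
    (hy0 : ∀ N < NN, y 0 (N + 1) = G N (y 0 N))
    (hyk : ∀ k, ∀ N < NN,
      y (k + 1) (N + 1) = G N (y (k + 1) N) + E N (y k N) - G N (y k N))
    (μ τ : ℝ)
    (hμ : μ = Real.exp (Cc * T) / Cd *
      ((range (NN + 1)).sup' (nonempty_range_iff.mpr (Nat.succ_ne_zero NN))
        fun N => 1 + ‖u N‖))
    (hτ : τ = Cd * T * Real.exp (-(Cc * ΔT)) * εG) :
    ∀ k : ℕ, ∀ N ≤ NN,
      ‖u N - y k N‖ ≤ μ * τ ^ (k + 1) / (Nat.factorial (k + 1) : ℝ) :=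
  parareal_ideal_convergence_general NN ΔT hΔT T hT E G εG Cc Cd hεG hCc hCd hacc hlip hdef u hu y
    hyk0 hy0 hyk μ τ hμ hτ
end

section
/- Under the same hypotheses (i)–(iii) on $\mathcal{E}$, $\mathcal{G}$, $\delta\mathcal{G}$ as in the ideal parareal convergence theorem, consider the perturbed parareal iteration $y_0^0 = u(T_0)$, $y_0^{N+1} = \mathcal{G}(N, y_0^N)$, and $y_{k+1}^{N+1} = \mathcal{G}(N, y_{k+1}^N) + F_k(N, y_k^N) - \mathcal{G}(N, y_k^N)$, where the approximate fine propagators $F_k$ satisfy $\|F_k(N, y_k^N) - \mathcal{E}(N, y_k^N)\| \le \zeta_k\,\Delta T\,(1 + \|y_k^N\|)$ for all $N$, with tolerances $\zeta_k = \frac{\varepsilon_{\mathcal G}^{k+2}}{(k+1)!\,\nu_k}$ and $\nu_k = \frac{\max_{0\le N\le \underline N}(1+\|y_k^N\|)}{\max_{0\le N\le \underline N}(1+\|u(T_N)\|)}$. Then for every $k \ge 0$, $\max_{0\le N\le \underline N}\|u(T_N)-y_k^N\| \le \mu\, \frac{\tilde\tau^{\,k+1}}{(k+1)!}$, where $\tilde\tau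 = \tau + \varepsilon_{\mathcal G}$, $\tau = C_d\,T\,e^{-C_c\Delta T}\varepsilon_{\mathcal G}$, and $\mu = \frac{e^{C_c T}}{C_d}\max_{0\le N\le \underline N}(1+\|u(T_N)\|)$. -/
/-!
Write `e_k^N = ‖u(T_N) - y_k^N‖`, `β = 1 + C_c ΔT`, `α = C_d ΔT ε_G` and
`M = max_N (1 + ‖u(T_N)‖)`. Lipschitz continuity of `𝒢`, the bounds on `δ𝒢 = ℰ - 𝒢` and the
tolerances `ζ_k` give the linear recursion
`e_{k+1}^{N+1} ≤ β e_{k+1}^N + α e_k^N + S_{k+1}` with `S_i = ΔT ε_G^{i+1} M / i!`.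
Comparing with the explicit solution of this recursion bounds `e_k^N` by
`∑_{i+j=k} S_i α^j C(N, j+1) β^{N-j-1}`; then `C(N, j+1) ≤ N^{j+1}/(j+1)!` and `β ≤ e^{C_c ΔT}`
turn the sum into `μ ∑_{i+j=k} τ^{j+1}/(j+1)! · ε_G^i/i!`, a part of the binomial expansion of
`μ (τ + ε_G)^{k+1}/(k+1)!`.
-/

open Finset
open scoped Nat

theorem add_pow_div_factorial {K : Type*} [Field K] [CharZero K] (x y : K) (n : ℕ) :
    (x + y) ^ n / n ! = ∑ p ∈ antidiagonal n, x ^ p.1 / p.1 ! * (y ^ p.2 / p.2 !) := by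
  rw [(Commute.all x y).add_pow', sum_div]
  refine sum_congr rfl fun p hp => ?_
  have hfac : ((p.1 + p.2)! : K) ≠ 0 := Nat.cast_ne_zero.2 (Nat.factorial_ne_zero _)
  rw [← mem_antidiagonal.mp hp, nsmul_eq_mul, Nat.cast_add_choose]
  field_simp

theorem sum_antidiagonal_pow_succ_div_factorial_le {a b : ℝ} (hb : 0 ≤ b) (k : ℕ) :
    ∑ p ∈ antidiagonal k, a ^ (p.1 + 1) / (p.1 + 1)! * (b ^ p.2 / p.2 !) ≤
      (a + b) ^ (k + 1) / (k + 1)! := by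
  rw [add_pow_div_factorial, Nat.sum_antidiagonal_succ]
  exact le_add_of_nonneg_left (by positivity)

/-- Zero-data solution of `e_{k+1}^{N+1} = β e_{k+1}^N + α e_k^N + β^N S_{k+1}`: the defect `S i`,
passed on through `j` corrections, picks up `α ^ j` and `β ^ (N - j - 1)`, and `N.choose (j + 1)`
counts the time steps at which it enters and is passed on. -/
noncomputable def pararealMajorant (β α : ℝ) (S : ℕ → ℝ) (k N : ℕ) : ℝ :=
  ∑ p ∈ antidiagonal k, S p.2 * α ^ p.1 * N.choose (p.1 + 1) * β ^ N / β ^ (p.1 + 1)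

section pararealMajorant

variable {β α : ℝ} {S : ℕ → ℝ}

theorem pararealMajorant_zero_right (k : ℕ) : pararealMajorant β α S k 0 = 0 := by
  simp [pararealMajorant]

theorem pararealMajorant_zero_succ (hβ : β ≠ 0) (N : ℕ) :
    pararealMajorant β α S 0 (N + 1) = β * pararealMajorant β α S 0 N + S 0 * β ^ N := by
  simp only [pararealMajorant, Nat.antidiagonal_zero, sum_singleton, zero_add,
    Nat.choose_one_right]
  push_cast
  field_simp
  ring

theorem pararealMajorant_succ_succ (hβ : β ≠ 0) (k N : ℕ) :
    pararealMajorant β α S (k + 1) (N + 1) =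
      β * pararealMajorant β α S (k + 1) N + α * pararealMajorant β α S k N +
        S (k + 1) * β ^ N := by
  have pascal : ∀ p ∈ antidiagonal (k + 1),
      S p.2 * α ^ p.1 * (N + 1).choose (p.1 + 1) * β ^ (N + 1) / β ^ (p.1 + 1) =
        β * (S p.2 * α ^ p.1 * N.choose (p.1 + 1) * β ^ N / β ^ (p.1 + 1)) +
          S p.2 * α ^ p.1 * N.choose p.1 * β ^ N / β ^ p.1 := by
    intro p _
    rw [Nat.choose_succ_succ']
    push_cast
    field_simp
    ring
  have diagonal : ∑ p ∈ antidiagonal (k + 1), S p.2 * α ^ p.1 * N.choose p.1 * β ^ N / β ^ p.1 =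
      α * pararealMajorant β α S k N + S (k + 1) * β ^ N := by
    rw [Nat.sum_antidiagonal_succ, pararealMajorant, mul_sum, add_comm]
    congr 1
    · refine sum_congr rfl fun p _ => ?_
      rw [pow_succ, pow_succ]
      field_simp
    · simp
  rw [pararealMajorant, sum_congr rfl pascal, sum_add_distrib, ← mul_sum, diagonal,
    ← pararealMajorant]
  ring

theorem le_pararealMajorant (hβ : 1 ≤ β) (hα : 0 ≤ α) (hS : ∀ i, 0 ≤ S i) {n : ℕ}
    {e : ℕ → ℕ → ℝ} (he : ∀ k, e k 0 = 0)
    (hrec₀ : ∀ N < n, e 0 (N + 1) ≤ β * e 0 N + S 0)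
    (hrec : ∀ k, ∀ N < n, e (k + 1) (N + 1) ≤ β * e (k + 1) N + α * e k N + S (k + 1)) :
    ∀ k, ∀ N ≤ n, e k N ≤ pararealMajorant β α S k N := by
  have hβ₀ : β ≠ 0 := (zero_lt_one.trans_le hβ).ne'
  have hβ₀' : 0 ≤ β := zero_le_one.trans hβ
  have hSβ : ∀ i N, S i ≤ S i * β ^ N := fun i N => le_mul_of_one_le_right (hS i) (one_le_pow₀ hβ)
  intro k
  induction k with
  | zero =>
    intro N hN
    induction N with
    | zero => simp [he, pararealMajorant_zero_right]
    | succ N ih =>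
      rw [pararealMajorant_zero_succ hβ₀]
      calc e 0 (N + 1) ≤ β * e 0 N + S 0 := hrec₀ N hN
        _ ≤ _ := by gcongr; exacts [ih (by omega), hSβ 0 N]
  | succ k ihk =>
    intro N hN
    induction N with
    | zero => simp [he, pararealMajorant_zero_right]
    | succ N ih =>
      rw [pararealMajorant_succ_succ hβ₀]
      calc e (k + 1) (N + 1) ≤ β * e (k + 1) N + α * e k N + S (k + 1) := hrec k N hN
        _ ≤ _ := by gcongr; exacts [ih (by omega), ihk N (by omega), hSβ (k + 1) N]

end pararealMajorant

theorem choose_mul_pow_div_pow_le {β B : ℝ} (hβ : 1 ≤ β) (hβB : β ≤ B) {N n : ℕ} (hN : N ≤ n)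
    (m : ℕ) : (N.choose m : ℝ) * β ^ N / β ^ m ≤ (n : ℝ) ^ m / m ! * (B ^ n / B ^ m) := by
  have hβ₀ : β ≠ 0 := (zero_lt_one.trans_le hβ).ne'
  have hB₀ : B ≠ 0 := (zero_lt_one.trans_le (hβ.trans hβB)).ne'
  rcases lt_or_ge N m with hNm | hmN
  · rw [Nat.choose_eq_zero_of_lt hNm, Nat.cast_zero, zero_mul, zero_div]
    have : 0 ≤ B := zero_le_one.trans (hβ.trans hβB)
    positivity
  · calc (N.choose m : ℝ) * β ^ N / β ^ m = N.choose m * β ^ (N - m) := by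
          rw [pow_sub₀ β hβ₀ hmN]; ring
      _ ≤ (n : ℝ) ^ m / m ! * B ^ (n - m) := by
          gcongr
          · exact (Nat.choose_le_pow_div m N).trans (by gcongr)
          · exact (pow_le_pow_left₀ (zero_le_one.trans hβ) hβB _).trans
              (pow_le_pow_right₀ (hβ.trans hβB) (Nat.sub_le_sub_right hN m))
      _ = (n : ℝ) ^ m / m ! * (B ^ n / B ^ m) := by
          rw [pow_sub₀ B hB₀ (hmN.trans hN)]; ring

theorem pararealMajorant_le {Δ ε Cc Cd M : ℝ} (hΔ : 0 ≤ Δ) (hε : 0 ≤ ε) (hCc : 0 ≤ Cc)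
    (hCd : 0 < Cd) (hM : 0 ≤ M) {N n : ℕ} (hN : N ≤ n) (k : ℕ) :
    pararealMajorant (1 + Cc * Δ) (Cd * Δ * ε) (fun i => Δ * ε ^ (i + 1) * M / i !) k N ≤
      Real.exp (Cc * (n * Δ)) / Cd * M * ∑ p ∈ antidiagonal k,
        (Cd * (n * Δ) * Real.exp (-(Cc * Δ)) * ε) ^ (p.1 + 1) / (p.1 + 1)! * (ε ^ p.2 / p.2 !) := by
  rw [Real.exp_neg]
  set B := Real.exp (Cc * Δ)
  have hβB : 1 + Cc * Δ ≤ B := by linarith [Real.add_one_le_exp (Cc * Δ)]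
  have hβ : 1 ≤ 1 + Cc * Δ := le_add_of_nonneg_right (by positivity)
  have hexp : Real.exp (Cc * (n * Δ)) = B ^ n := by
    rw [← Real.exp_nat_mul]; ring_nf
  rw [pararealMajorant, mul_sum]
  gcongr with p hp
  calc Δ * ε ^ (p.2 + 1) * M / p.2 ! * (Cd * Δ * ε) ^ p.1 * (N.choose (p.1 + 1) : ℝ) *
        (1 + Cc * Δ) ^ N / (1 + Cc * Δ) ^ (p.1 + 1)
      = Δ * ε ^ (p.2 + 1) * M / p.2 ! * (Cd * Δ * ε) ^ p.1 *
        ((N.choose (p.1 + 1) : ℝ) * (1 + Cc * Δ) ^ N / (1 + Cc * Δ) ^ (p.1 + 1)) := by ring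
    _ ≤ Δ * ε ^ (p.2 + 1) * M / p.2 ! * (Cd * Δ * ε) ^ p.1 *
        ((n : ℝ) ^ (p.1 + 1) / (p.1 + 1)! * (B ^ n / B ^ (p.1 + 1))) := by
      gcongr
      exact choose_mul_pow_div_pow_le hβ hβB hN (p.1 + 1)
    _ = _ := by
      rw [hexp]
      field_simp
      ring

section

variable {U : Type*} [SeminormedAddCommGroup U]

theorem norm_sub_coarse_le {E G : U → U} {x y : U} {L c : ℝ}
    (hG : ‖G x - G y‖ ≤ L * ‖x - y‖) (hδG : ‖E x - G x‖ ≤ c) : ‖E x - G y‖ ≤ L * ‖x - y‖ + c :=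
  calc ‖E x - G y‖ = ‖(G x - G y) + (E x - G x)‖ := by congr 1; abel
    _ ≤ L * ‖x - y‖ + c := (norm_add_le _ _).trans (add_le_add hG hδG)

theorem norm_sub_parareal_le {E G : U → U} {x y z f : U} {L α c : ℝ}
    (hG : ‖G x - G y‖ ≤ L * ‖x - y‖) (hδG : ‖(E x - G x) - (E z - G z)‖ ≤ α * ‖x - z‖)
    (hf : ‖f - E z‖ ≤ c) : ‖E x - (G y + f - G z)‖ ≤ L * ‖x - y‖ + α * ‖x - z‖ + c :=
  calc ‖E x - (G y + f - G z)‖ = ‖(G x - G y) + ((E x - G x) - (E z - G z)) + (E z - f)‖ := by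
        congr 1; abel
    _ ≤ L * ‖x - y‖ + α * ‖x - z‖ + c :=
        norm_add₃_le.trans (add_le_add (add_le_add hG hδG) (norm_sub_rev (E z) f ▸ hf))

theorem one_add_norm_le_sup' (v : ℕ → U) {n N : ℕ} (hN : N ≤ n) :
    1 + ‖v N‖ ≤ (range (n + 1)).sup' (nonempty_range_iff.mpr (Nat.succ_ne_zero n))
      fun N => 1 + ‖v N‖ :=
  le_sup' (fun N => 1 + ‖v N‖) (mem_range.2 (Nat.lt_succ_of_le hN))

theorem sup'_one_add_norm_pos (v : ℕ → U) (n : ℕ) :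
    0 < (range (n + 1)).sup' (nonempty_range_iff.mpr (Nat.succ_ne_zero n)) fun N => 1 + ‖v N‖ :=
  (add_pos_of_pos_of_nonneg one_pos (norm_nonneg (v 0))).trans_le
    (one_add_norm_le_sup' v (Nat.zero_le n))

end

theorem div_mul_div_mul_le {c f Δ a My Mu : ℝ} (hc : 0 ≤ c) (hf : 0 < f) (hΔ : 0 ≤ Δ)
    (ha : a ≤ My) (hMy : 0 < My) (hMu : 0 < Mu) :
    c / (f * (My / Mu)) * Δ * a ≤ Δ * c * Mu / f := by
  calc c / (f * (My / Mu)) * Δ * a ≤ c / (f * (My / Mu)) * Δ * My := by gcongr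
    _ = Δ * c * Mu / f := by field_simp

theorem parareal_adaptive_convergence_general
    {U : Type*} [NormedAddCommGroup U]
    (NN : ℕ) (ΔT : ℝ) (hΔT : 0 < ΔT)
    (T : ℝ) (hT : T = NN * ΔT)
    (E G : ℕ → U → U)
    (εG Cc Cd : ℝ) (hεG : 0 < εG) (hCc : 0 < Cc) (hCd : 0 < Cd)
    (hacc : ∀ N < NN, ∀ x : U, ‖E N x - G N x‖ ≤ ΔT * (1 + ‖x‖) * εG)
    (hlip : ∀ N < NN, ∀ x y : U,
      ‖G N x - G N y‖ ≤ (1 + Cc * ΔT) * ‖x - y‖)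
    (hdef : ∀ N < NN, ∀ x y : U,
      ‖(E N x - G N x) - (E N y - G N y)‖ ≤ Cd * ΔT * εG * ‖x - y‖)
    (u : ℕ → U) (hu : ∀ N < NN, u (N + 1) = E N (u N))
    -- approximate fine propagators, one per parareal iteration
    (F : ℕ → ℕ → U → U)
    -- perturbed parareal iterates
    (y : ℕ → ℕ → U)
    (hyk0 : ∀ k, y k 0 = u 0)
    (hy0 : ∀ N < NN, y 0 (N + 1) = G N (y 0 N))
    (hyk : ∀ k, ∀ N < NN,
      y (k + 1) (N + 1) = G N (y (k + 1) N) + F k N (y k N) - G N (y k N))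
    -- ratios ν_k and tolerances ζ_k
    (ν ζ : ℕ → ℝ)
    (hν : ∀ k, ν k =
      ((range (NN + 1)).sup' (nonempty_range_iff.mpr (Nat.succ_ne_zero NN))
          fun N => 1 + ‖y k N‖) /
        ((range (NN + 1)).sup' (nonempty_range_iff.mpr (Nat.succ_ne_zero NN))
          fun N => 1 + ‖u N‖))
    (hζ : ∀ k, ζ k = εG ^ (k + 2) / ((Nat.factorial (k + 1) : ℝ) * ν k))
    -- accuracy of the approximate fine propagations
    (hF : ∀ k, ∀ N < NN,
      ‖F k N (y k N) - E N (y k N)‖ ≤ ζ k * ΔT * (1 + ‖y k N‖))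
    (μ τ τ' : ℝ)
    (hμ : μ = Real.exp (Cc * T) / Cd *
      ((range (NN + 1)).sup' (nonempty_range_iff.mpr (Nat.succ_ne_zero NN))
        fun N => 1 + ‖u N‖))
    (hτ : τ = Cd * T * Real.exp (-(Cc * ΔT)) * εG)
    (hτ' : τ' = τ + εG) :
    ∀ k : ℕ, ∀ N ≤ NN,
      ‖u N - y k N‖ ≤ μ * τ' ^ (k + 1) / (Nat.factorial (k + 1) : ℝ) := by
  subst hT hμ hτ hτ'
  set M := (range (NN + 1)).sup' (nonempty_range_iff.mpr (Nat.succ_ne_zero NN)) fun N => 1 + ‖u N‖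
  have hM : 0 < M := sup'_one_add_norm_pos u NN
  have hcoarse (N : ℕ) (hN : N < NN) : ‖E N (u N) - G N (u N)‖ ≤ ΔT * εG ^ (0 + 1) * M / 0 ! := by
    refine (hacc N hN (u N)).trans ?_
    rw [mul_right_comm, pow_one, Nat.factorial_zero, Nat.cast_one, div_one]
    gcongr
    exact one_add_norm_le_sup' u hN.le
  -- ν_k cancels the size of the iterate: the defect is measured against the exact solution
  have hfine (k N : ℕ) (hN : N < NN) :
      ‖F k N (y k N) - E N (y k N)‖ ≤ ΔT * εG ^ (k + 1 + 1) * M / (k + 1)! := by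
    refine (hF k N hN).trans ?_
    rw [hζ, hν]
    exact div_mul_div_mul_le (by positivity) (by positivity) hΔT.le
      (one_add_norm_le_sup' (y k) hN.le) (sup'_one_add_norm_pos (y k) NN) hM
  have herr := le_pararealMajorant (e := fun k N => ‖u N - y k N‖) (n := NN)
    (β := 1 + Cc * ΔT) (α := Cd * ΔT * εG) (S := fun i => ΔT * εG ^ (i + 1) * M / i !)
    (le_add_of_nonneg_right (by positivity)) (by positivity) (fun i => by positivity)
    (fun k => by simp [hyk0])
    (fun N hN => by
      rw [hu N hN, hy0 N hN]
      exact norm_sub_coarse_le (hlip N hN _ _) (hcoarse N hN))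
    (fun k N hN => by
      rw [hu N hN, hyk k N hN]
      exact norm_sub_parareal_le (hlip N hN _ _) (hdef N hN _ _) (hfine k N hN))
  intro k N hN
  calc ‖u N - y k N‖ ≤ _ := herr k N hN
    _ ≤ _ := pararealMajorant_le hΔT.le hεG.le hCc.le hCd hM.le hN k
    _ ≤ _ := by
      rw [mul_div_assoc]
      exact mul_le_mul_of_nonneg_left (sum_antidiagonal_pow_succ_div_factorial_le hεG.le k)
        (by positivity)

theorem parareal_adaptive_convergence
    {U : Type*} [NormedAddCommGroup U] [NormedSpace ℝ U] [CompleteSpace U]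
    (NN : ℕ) (hNN : 1 ≤ NN) (ΔT : ℝ) (hΔT : 0 < ΔT)
    (T : ℝ) (hT : T = NN * ΔT)
    (E G : ℕ → U → U)
    (εG Cc Cd : ℝ) (hεG : 0 < εG) (hCc : 0 < Cc) (hCd : 0 < Cd)
    (hacc : ∀ N < NN, ∀ x : U, ‖E N x - G N x‖ ≤ ΔT * (1 + ‖x‖) * εG)
    (hlip : ∀ N < NN, ∀ x y : U,
      ‖G N x - G N y‖ ≤ (1 + Cc * ΔT) * ‖x - y‖)
    (hdef : ∀ N < NN, ∀ x y : U,
      ‖(E N x - G N x) - (E N y - G N y)‖ ≤ Cd * ΔT * εG * ‖x - y‖)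
    (u : ℕ → U) (hu : ∀ N < NN, u (N + 1) = E N (u N))
    -- approximate fine propagators, one per parareal iteration
    (F : ℕ → ℕ → U → U)
    -- perturbed parareal iterates
    (y : ℕ → ℕ → U)
    (hy00 : y 0 0 = u 0) (hyk0 : ∀ k, y k 0 = u 0)
    (hy0 : ∀ N < NN, y 0 (N + 1) = G N (y 0 N))
    (hyk : ∀ k, ∀ N < NN,
      y (k + 1) (N + 1) = G N (y (k + 1) N) + F k N (y k N) - G N (y k N))
    -- ratios ν_k and tolerances ζ_k
    (ν ζ : ℕ → ℝ)
    (hν : ∀ k, ν k =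
      ((range (NN + 1)).sup' (nonempty_range_iff.mpr (Nat.succ_ne_zero NN))
          fun N => 1 + ‖y k N‖) /
        ((range (NN + 1)).sup' (nonempty_range_iff.mpr (Nat.succ_ne_zero NN))
          fun N => 1 + ‖u N‖))
    (hζ : ∀ k, ζ k = εG ^ (k + 2) / ((Nat.factorial (k + 1) : ℝ) * ν k))
    -- accuracy of the approximate fine propagations
    (hF : ∀ k, ∀ N < NN,
      ‖F k N (y k N) - E N (y k N)‖ ≤ ζ k * ΔT * (1 + ‖y k N‖))
    (μ τ τ' : ℝ)
    (hμ : μ = Real.exp (Cc * T) / Cd *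
      ((range (NN + 1)).sup' (nonempty_range_iff.mpr (Nat.succ_ne_zero NN))
        fun N => 1 + ‖u N‖))
    (hτ : τ = Cd * T * Real.exp (-(Cc * ΔT)) * εG)
    (hτ' : τ' = τ + εG) :
    ∀ k : ℕ, ∀ N ≤ NN,
      ‖u N - y k N‖ ≤ μ * τ' ^ (k + 1) / (Nat.factorial (k + 1) : ℝ) :=
  parareal_adaptive_convergence_general NN ΔT hΔT T hT E G εG Cc Cd hεG hCc hCd hacc hlip hdef u hu
    F y hyk0 hy0 hyk ν ζ hν hζ hF μ τ τ' hμ hτ hτ'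
end

section
/- Let $0 < \varepsilon$ and $K \ge 1$, and suppose $\varepsilon \le 1$. With $\zeta_k = \varepsilon^{k+2}/(k+1)!$, one has $\sum_{k=0}^{K-1} \zeta_k^{-1} \le \zeta_{K-1}^{-1}\,(1 + \varepsilon)$ provided $K \ge 2$ and $\varepsilon \le 1/2$. Consequently the ratio of the adaptive parareal cost $\sum_{k=0}^{K-1} \zeta_k^{-1}$ to the classical parareal cost $K\,\zeta_{K-1}^{-1}$ is at most $(1+\varepsilon)/K$. -/
/-!
Write `c k = (ζ k)⁻¹ = (k + 1)! / ε ^ (k + 2)`. Then `ε * c (k + 1) = (k + 2) * c k`, which is at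
least `(1 + ε) * c k` once `ε ≤ 1`. Inductively, the bound `c n * (1 + ε)` on the sum up to `c n`
is absorbed into the next term: it is at most `ε * c (n + 1)`, and adding `c (n + 1)` gives the
bound `c (n + 1) * (1 + ε)`. Dividing by the classical cost `K * c (K - 1)` gives the ratio.
-/

open Finset Nat

theorem sum_range_succ_le_mul_one_add {ε : ℝ} (hε : 0 ≤ ε) {c : ℕ → ℝ} (hc₀ : 0 ≤ c 0)
    (hc : ∀ k, (1 + ε) * c k ≤ ε * c (k + 1)) (n : ℕ) :
    ∑ k ∈ range (n + 1), c k ≤ c n * (1 + ε) := by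
  induction n with
  | zero =>
    rw [zero_add, sum_range_one]
    exact le_mul_of_one_le_right hc₀ (by linarith)
  | succ n ih =>
    calc ∑ k ∈ range (n + 1 + 1), c k ≤ c n * (1 + ε) + c (n + 1) := by
          rw [sum_range_succ]; gcongr
      _ ≤ ε * c (n + 1) + c (n + 1) := by linarith [hc n]
      _ = c (n + 1) * (1 + ε) := by ring

theorem one_add_mul_factorial_div_pow_le {ε : ℝ} (hε0 : 0 < ε) (hε1 : ε ≤ 1) (k : ℕ) :
    (1 + ε) * ((k + 1)! / ε ^ (k + 2) : ℝ) ≤ ε * ((k + 1 + 1)! / ε ^ (k + 1 + 2)) := by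
  have hstep : ε * ((k + 1 + 1)! / ε ^ (k + 1 + 2) : ℝ) = (k + 2) * ((k + 1)! / ε ^ (k + 2)) := by
    rw [Nat.factorial_succ]
    field_simp
    push_cast
    ring
  rw [hstep]
  gcongr ?_ * _
  linarith [k.cast_nonneg (α := ℝ)]

theorem div_mul_le_div_of_le_mul {S c a K : ℝ} (hc : 0 < c) (hK : 0 ≤ K) (h : S ≤ c * a) :
    S / (K * c) ≤ a / K := by
  rw [mul_comm, ← div_div]
  gcongr
  rwa [div_le_iff₀ hc, mul_comm]

theorem adaptive_cost_ratio_general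
    (ε : ℝ) (hε0 : 0 < ε) (hε1 : ε ≤ 1) (K : ℕ) (hK : 2 ≤ K)
    (ζ : ℕ → ℝ) (hζ : ∀ k, ζ k = ε ^ (k + 2) / (Nat.factorial (k + 1) : ℝ)) :
    (∑ k ∈ range K, (ζ k)⁻¹) ≤ (ζ (K - 1))⁻¹ * (1 + ε) ∧
      (∑ k ∈ range K, (ζ k)⁻¹) / (K * (ζ (K - 1))⁻¹) ≤ (1 + ε) / K := by
  have hζinv : ∀ k, (ζ k)⁻¹ = (k + 1)! / ε ^ (k + 2) := fun k => by rw [hζ k, inv_div]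
  obtain ⟨n, rfl⟩ : ∃ n, K = n + 1 := ⟨K - 1, by omega⟩
  rw [Nat.add_sub_cancel]
  have hsum : ∑ k ∈ range (n + 1), (ζ k)⁻¹ ≤ (ζ n)⁻¹ * (1 + ε) := by
    refine sum_range_succ_le_mul_one_add hε0.le ?_ (fun k => ?_) n
    · rw [hζinv]; positivity
    · simpa only [hζinv] using one_add_mul_factorial_div_pow_le hε0 hε1 k
  have hlast : 0 < (ζ n)⁻¹ := by rw [hζinv]; positivity
  exact ⟨hsum, div_mul_le_div_of_le_mul hlast (Nat.cast_nonneg _) hsum⟩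

theorem adaptive_cost_ratio
    (ε : ℝ) (hε0 : 0 < ε) (hε1 : ε ≤ 1) (K : ℕ) (hK : 2 ≤ K) (hε2 : ε ≤ 1 / 2)
    (ζ : ℕ → ℝ) (hζ : ∀ k, ζ k = ε ^ (k + 2) / (Nat.factorial (k + 1) : ℝ)) :
    (∑ k ∈ range K, (ζ k)⁻¹) ≤ (ζ (K - 1))⁻¹ * (1 + ε) ∧
      (∑ k ∈ range K, (ζ k)⁻¹) / (K * (ζ (K - 1))⁻¹) ≤ (1 + ε) / K :=
  adaptive_cost_ratio_general ε hε0 hε1 K hK ζ hζ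
end

section
/- Let $\alpha, \beta, \gamma \ge 0$ and let $(e_k^N)$ satisfy $e_k^0 = 0$ for all $k \ge 0$, $e_0^N = \beta e_0^{N-1} + \gamma$ for $N \ge 1$, and $e_k^N = \alpha e_{k-1}^{N-1} + \beta e_k^{N-1}$ for $k, N \ge 1$. Then for every $k \ge 0$ the generating function $\rho_k(\xi) = \sum_{N \ge 0} e_k^N \xi^N$ (a formal power series; the sum is well-defined since each coefficient is a finite expression) satisfies the closed form $\rho_k(\xi) = \gamma\,\alpha^k\, \frac{\xi^{k+1}}{(1-\xi)(1-\beta\xi)^{k+1}}$, meaning $\rho_k(\xi)\,(1-\xi)(1-\beta\xi)^{k+1} = \gamma\,\alpha^k\,\xi^{k+1}$ in $\mathbb{R}[[\xi]]$. -/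
open PowerSeries

/-! Multiplying by `1 - βξ` turns the recursions into `ρ₀ (1 - βξ) = γξ / (1 - ξ)` and
`ρₖ₊₁ (1 - βξ) = αξ ρₖ`; iterating the second from the first gives the closed form. -/

theorem PowerSeries.mk_mul_one_sub_C_mul_X_eq_X_mul_mk {R : Type*} [CommRing R] {b : R}
    {g h : ℕ → R} (hg0 : g 0 = 0) (hg : ∀ n, g (n + 1) = b * g n + h n) :
    mk g * (1 - C b * X) = X * mk h := by
  ext (_ | n)
  · simp [hg0]
  · rw [mul_sub, mul_one, mul_left_comm, map_sub, coeff_C_mul, coeff_succ_mul_X, mul_comm X,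
      coeff_succ_mul_X, coeff_mk, coeff_mk, coeff_mk, hg]
    ring

theorem mul_mul_pow_succ_eq_of_mul_eq_mul_prev {M : Type*} [CommMonoid M] {ρ : ℕ → M}
    {q r a c : M} (h0 : ρ 0 * (r * q) = c) (hsucc : ∀ k, ρ (k + 1) * q = a * ρ k) (k : ℕ) :
    ρ k * (r * q ^ (k + 1)) = c * a ^ k := by
  induction k with
  | zero => simpa using h0
  | succ k ih =>
    calc ρ (k + 1) * (r * q ^ (k + 1 + 1)) = ρ (k + 1) * q * (r * q ^ (k + 1)) := by
          rw [pow_succ]; ac_rfl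
      _ = a * (ρ k * (r * q ^ (k + 1))) := by rw [hsucc, mul_assoc]
      _ = c * a ^ (k + 1) := by rw [ih, pow_succ', mul_left_comm]

theorem parareal_generating_function_closed_form
    (α β γ : ℝ)
    (e : ℕ → ℕ → ℝ)
    (h0 : ∀ k, e k 0 = 0)
    (hrec0 : ∀ N, e 0 (N + 1) = β * e 0 N + γ)
    (hrec : ∀ k N, e (k + 1) (N + 1) = α * e k N + β * e (k + 1) N) :
    ∀ k : ℕ,
      (PowerSeries.mk fun N : ℕ => e k N) *
          ((1 - PowerSeries.X) *
            (1 - PowerSeries.C β * PowerSeries.X) ^ (k + 1))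
        = PowerSeries.C (γ * α ^ k) * PowerSeries.X ^ (k + 1) := by
  have base : (mk fun N => e 0 N) * (1 - C β * X) = X * (C γ * mk 1) := by
    rw [mk_mul_one_sub_C_mul_X_eq_X_mul_mk (h0 0) hrec0]
    congr 1
    ext
    simp
  have step (k : ℕ) :
      (mk fun N => e (k + 1) N) * (1 - C β * X) = C α * X * mk fun N => e k N := by
    rw [mk_mul_one_sub_C_mul_X_eq_X_mul_mk (h := fun N => α * e k N) (h0 (k + 1))
        fun N => by rw [hrec]; ring,
      mul_comm (C α), mul_assoc]
    congr 1
    ext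
    simp
  have hbase : (mk fun N => e 0 N) * ((1 - X) * (1 - C β * X)) = C γ * X :=
    calc (mk fun N => e 0 N) * ((1 - X) * (1 - C β * X))
        = (mk fun N => e 0 N) * (1 - C β * X) * (1 - X) := by ring
      _ = C γ * X * (mk 1 * (1 - X)) := by rw [base]; ring
      _ = C γ * X := by rw [mk_one_mul_one_sub_eq_one, mul_one]
  intro k
  rw [mul_mul_pow_succ_eq_of_mul_eq_mul_prev (ρ := fun k => mk fun N => e k N) hbase step k]
  simp only [map_mul, map_pow]
  ring
end
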